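/- 𝔯_simult ≤ max{𝔯_σ, 𝔡}: given a σ-reaping family R of size 𝔯_σ and a totally dominating family D of size 𝔡, the family of sequences ⟨C ∖ h(n) : n ∈ ω⟩ for (C,h) ∈ R × D witnesses 𝔯_simult. -/
import Mathlib


open Cardinal

/-- `C` reaps `X`: `C ⊆* X` or `C ⊆* ω ∖ X`. -/
def Reaps (C X : Set ℕ) : Prop := (C \ X).Finite ∨ (C ∩ X).Finite

/-- The cardinal 𝔯_simult. -/
noncomputable def rSimult : Cardinal :=
  sInf { c | ∃ F : Set (ℕ → Set ℕ),
    (∀ B ∈ F, ∀ n, (B n).Infinite) ∧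
    (∀ A : ℕ → Set ℕ, (∀ n, (A n).Infinite) →
      ∃ B ∈ F, (∃ n, B 0 ⊆ (A n)ᶜ) ∨ (∀ n, B n ⊆ A n)) ∧
    #F = c }

/-- The σ-reaping number 𝔯_σ. -/
noncomputable def rSigma : Cardinal :=
  sInf { c | ∃ R : Set (Set ℕ), (∀ C ∈ R, C.Infinite) ∧
    (∀ A : ℕ → Set ℕ, ∃ C ∈ R, ∀ n, Reaps C (A n)) ∧ #R = c }

/-- The dominating number 𝔡, via totally dominating families. -/
noncomputable def frakDtotal : Cardinal :=
  sInf { c | ∃ D : Set (ℕ → ℕ),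
    (∀ f : ℕ → ℕ, ∃ h ∈ D, ∀ n, f n ≤ h n) ∧ #D = c }

/-! ### Auxiliary construction: a single reaper for a countable sequence of sets -/

open Classical in
/-- The decreasing tower of infinite sets deciding each `A k`. -/
noncomputable def tower (A : ℕ → Set ℕ) : ℕ → {S : Set ℕ // S.Infinite}
  | 0 => ⟨Set.univ, Set.infinite_univ⟩
  | k + 1 =>
    if h : ((tower A k).1 ∩ A k).Infinite then ⟨_, h⟩
    else ⟨(tower A k).1 \ A k, fun hf => (tower A k).2 (by
      have := (Set.not_infinite.mp h).union hf
      rwa [Set.inter_union_diff] at this)⟩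

lemma tower_succ_subset (A : ℕ → Set ℕ) (k : ℕ) :
    (tower A (k + 1)).1 ⊆ (tower A k).1 := by
  rw [tower]
  split
  · exact Set.inter_subset_left
  · exact Set.diff_subset

lemma tower_subset (A : ℕ → Set ℕ) {k l : ℕ} (hkl : k ≤ l) :
    (tower A l).1 ⊆ (tower A k).1 := by
  induction l, hkl using Nat.le_induction with
  | base => exact subset_rfl
  | succ l hl ih => exact (tower_succ_subset A l).trans ih

lemma tower_decides (A : ℕ → Set ℕ) (k : ℕ) :
    (tower A (k + 1)).1 ⊆ A k ∨ (tower A (k + 1)).1 ⊆ (A k)ᶜ := by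
  rw [tower]
  split
  · exact Or.inl Set.inter_subset_right
  · exact Or.inr fun x hx => hx.2

lemma exists_reaper (A : ℕ → Set ℕ) : ∃ C : Set ℕ, C.Infinite ∧ ∀ n, Reaps C (A n) := by
  choose c hc hlt using fun k (x : ℕ) => (tower A (k + 1)).2.exists_gt x
  set seq : ℕ → ℕ := fun k => Nat.rec (c 0 0) (fun k ih => c (k + 1) ih) k with hseq
  have hseqmem : ∀ k, seq k ∈ (tower A (k + 1)).1 := by
    intro k
    cases k with
    | zero => exact hc 0 0
    | succ k => exact hc (k + 1) (seq k)
  have hmono : StrictMono seq := strictMono_nat_of_lt_succ fun k => hlt (k + 1) (seq k)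
  refine ⟨Set.range seq, Set.infinite_range_of_injective hmono.injective, fun n => ?_⟩
  have key : Set.range seq \ (tower A (n + 1)).1 ⊆ seq '' Set.Iio n := by
    rintro x ⟨⟨k, rfl⟩, hx⟩
    refine ⟨k, ?_, rfl⟩
    rw [Set.mem_Iio]
    by_contra hk
    push_neg at hk
    exact hx (tower_subset A (Nat.succ_le_succ hk) (hseqmem k))
  have keyfin : (Set.range seq \ (tower A (n + 1)).1).Finite :=
    ((Set.finite_Iio n).image seq).subset key
  rcases tower_decides A n with h | h
  · exact Or.inl (keyfin.subset fun x hx => ⟨hx.1, fun hT => hx.2 (h hT)⟩)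
  · exact Or.inr (keyfin.subset fun x hx => ⟨hx.1, fun hT => h hT hx.2⟩)

lemma rSigma_mem : ∃ R : Set (Set ℕ), (∀ C ∈ R, C.Infinite) ∧
    (∀ A : ℕ → Set ℕ, ∃ C ∈ R, ∀ n, Reaps C (A n)) ∧ #R = rSigma := by
  have hne : { c | ∃ R : Set (Set ℕ), (∀ C ∈ R, C.Infinite) ∧
      (∀ A : ℕ → Set ℕ, ∃ C ∈ R, ∀ n, Reaps C (A n)) ∧ #R = c }.Nonempty := by
    refine ⟨#{C : Set ℕ | C.Infinite}, {C : Set ℕ | C.Infinite}, fun C hC => hC, fun A => ?_, rfl⟩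
    obtain ⟨C, hC, hR⟩ := exists_reaper A
    exact ⟨C, hC, hR⟩
  exact csInf_mem hne

lemma frakD_mem : ∃ D : Set (ℕ → ℕ),
    (∀ f : ℕ → ℕ, ∃ h ∈ D, ∀ n, f n ≤ h n) ∧ #D = frakDtotal := by
  have hne : { c | ∃ D : Set (ℕ → ℕ),
      (∀ f : ℕ → ℕ, ∃ h ∈ D, ∀ n, f n ≤ h n) ∧ #D = c }.Nonempty :=
    ⟨#(Set.univ : Set (ℕ → ℕ)), Set.univ, fun f => ⟨f, Set.mem_univ f, fun n => le_rfl⟩, rfl⟩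
  exact csInf_mem hne

lemma frakD_infinite : ℵ₀ ≤ frakDtotal := by
  obtain ⟨D, hdom, hcard⟩ := frakD_mem
  rw [← hcard]
  by_contra hlt
  push_neg at hlt
  have hfin : D.Finite := Cardinal.lt_aleph0_iff_set_finite.mp hlt
  obtain ⟨h, hhD, hdh⟩ := hdom (fun n => (hfin.toFinset.sup fun h => h n) + 1)
  have : h 0 ≤ hfin.toFinset.sup fun h => h 0 :=
    Finset.le_sup (f := fun h => h 0) (hfin.mem_toFinset.mpr hhD)
  have h2 : (hfin.toFinset.sup fun h => h 0) + 1 ≤ h 0 := hdh 0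
  exact lt_irrefl (h 0) ((Nat.lt_succ_of_le this).trans_le h2)

/-- The shifted family used to witness `rSimult`. -/
def shiftFam (p : Set ℕ × (ℕ → ℕ)) : ℕ → Set ℕ := fun n => p.1 \ {m | m < p.2 n}

theorem stmt8 : rSimult ≤ max rSigma frakDtotal := by
  obtain ⟨R, hRinf, hRreap, hRcard⟩ := rSigma_mem
  obtain ⟨D, hDdom, hDcard⟩ := frakD_mem
  have hFinf : ∀ B ∈ shiftFam '' (R ×ˢ D), ∀ n, (B n).Infinite := by
    rintro B ⟨⟨C, h⟩, ⟨hCR, _⟩, rfl⟩ n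
    exact (hRinf C hCR).diff (Set.finite_Iio (h n))
  have hFcover : ∀ A : ℕ → Set ℕ, (∀ n, (A n).Infinite) →
      ∃ B ∈ shiftFam '' (R ×ˢ D), (∃ n, B 0 ⊆ (A n)ᶜ) ∨ (∀ n, B n ⊆ A n) := by
    intro A _
    obtain ⟨C, hCR, hCreap⟩ := hRreap A
    by_cases hall : ∀ n, (C \ A n).Finite
    · -- C is almost contained in every A n
      obtain ⟨h, hhD, hdh⟩ := hDdom (fun n => sSup (C \ A n) + 1)
      refine ⟨shiftFam (C, h), ⟨(C, h), ⟨hCR, hhD⟩, rfl⟩, Or.inr fun n => ?_⟩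
      rintro m ⟨hmC, hm⟩
      simp only [Set.mem_setOf_eq, not_lt] at hm
      by_contra hmA
      have hle : m ≤ sSup (C \ A n) := le_csSup (hall n).bddAbove ⟨hmC, hmA⟩
      have := hdh n
      omega
    · push_neg at hall
      obtain ⟨n0, hn0⟩ := hall
      have hfin : (C ∩ A n0).Finite := (hCreap n0).resolve_left hn0
      obtain ⟨h, hhD, hdh⟩ := hDdom (fun _ => sSup (C ∩ A n0) + 1)
      refine ⟨shiftFam (C, h), ⟨(C, h), ⟨hCR, hhD⟩, rfl⟩, Or.inl ⟨n0, ?_⟩⟩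
      rintro m ⟨hmC, hm⟩
      simp only [Set.mem_setOf_eq, not_lt] at hm
      intro hmA
      have hle : m ≤ sSup (C ∩ A n0) := le_csSup hfin.bddAbove ⟨hmC, hmA⟩
      have := hdh 0
      omega
  have h1 : rSimult ≤ #(shiftFam '' (R ×ˢ D)) :=
    csInf_le' ⟨shiftFam '' (R ×ˢ D), hFinf, hFcover, rfl⟩
  have h2 : #(shiftFam '' (R ×ˢ D)) ≤ #(R ×ˢ D : Set _) := Cardinal.mk_image_le
  have h3 : #(R ×ˢ D : Set _) = #R * #D := by
    rw [Cardinal.mk_congr (Equiv.Set.prod R D), Cardinal.mk_prod]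
    simp
  have h4 : #R * #D ≤ max (#R) (#D) := by
    calc #R * #D ≤ max (max (#R) (#D)) ℵ₀ := Cardinal.mul_le_max _ _
    _ = max (#R) (#D) := by
        rw [max_eq_left]
        exact le_max_of_le_right (hDcard ▸ frakD_infinite)
  have h5 : #(shiftFam '' (R ×ˢ D)) ≤ max rSigma frakDtotal := by
    rw [← hRcard, ← hDcard]
    exact (h2.trans_eq h3).trans h4
  exact h1.trans h5
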